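/- arXiv:0709.2393 — 6 statements merged into one kernel-verified Lean document; each statement's English description precedes it below -/
import Mathlib

section
/- Let d ≥ 1, let a', c ∈ ℤ^d with c ≠ 0, let t be a real number with t ≥ 0, and let Λ be a real number with Λ > 1. Set a = a' + tc ∈ ℝ^d. If |a| ≥ Λ(|a'| + |c|)|c|, then | |a|/|c| − t | ≤ t/(Λ−1) and | ⟨a,c⟩/|c|² − t | ≤ t/(Λ−1). -/
/-!
With `a = a' + t c`, both `|a|/|c|` and `⟨a,c⟩/|c|²` differ from `t` by at most `|a'|/|c|`
(triangle inequality, resp. Cauchy–Schwarz), and `|a'|/|c| ≤ |a'|` since a nonzero lattice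
vector has `|c| ≥ 1`. Combining the hypothesis with `|a| ≤ |a'| + t|c|` and `|c| ≥ 1` gives
`(Λ - 1)|a'| ≤ t`.
-/

open scoped RealInnerProductSpace

/-- The lattice point `a ∈ ℤ^d` viewed as a vector in Euclidean space `ℝ^d`. -/
noncomputable def latt {d : ℕ} (a : Fin d → ℤ) : EuclideanSpace ℝ (Fin d) :=
  WithLp.toLp 2 (fun i => (a i : ℝ))

lemma one_le_norm_latt {d : ℕ} {c : Fin d → ℤ} (hc : c ≠ 0) : 1 ≤ ‖latt c‖ := by
  obtain ⟨i, hi⟩ := Function.ne_iff.mp hc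
  calc (1 : ℝ) ≤ |(c i : ℝ)| := by exact_mod_cast Int.one_le_abs hi
    _ = ‖latt c i‖ := by simp [latt]
    _ ≤ ‖latt c‖ := PiLp.norm_apply_le _ i

section NormedSpace

variable {E : Type*} [NormedAddCommGroup E] [NormedSpace ℝ E]

lemma abs_norm_add_smul_div_norm_sub_le (u : E) {v : E} (hv : v ≠ 0) {t : ℝ} (ht : 0 ≤ t) :
    |‖u + t • v‖ / ‖v‖ - t| ≤ ‖u‖ / ‖v‖ := by
  have hv' : 0 < ‖v‖ := norm_pos_iff.mpr hv
  have hsmul : ‖t • v‖ = ‖v‖ * t := by rw [norm_smul, Real.norm_of_nonneg ht, mul_comm]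
  calc |‖u + t • v‖ / ‖v‖ - t| = |‖u + t • v‖ - ‖t • v‖| / ‖v‖ := by
        rw [div_sub' hv'.ne', abs_div, abs_of_pos hv', hsmul]
    _ ≤ ‖u‖ / ‖v‖ := by
        gcongr
        simpa using abs_norm_sub_norm_le (u + t • v) (t • v)

lemma norm_le_div_sub_one_of_mul_le_norm_add_smul {u v : E} (hv : 1 ≤ ‖v‖) {t Λ : ℝ}
    (ht : 0 ≤ t) (hΛ : 1 < Λ) (h : Λ * (‖u‖ + ‖v‖) * ‖v‖ ≤ ‖u + t • v‖) :
    ‖u‖ ≤ t / (Λ - 1) := by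
  have htri : ‖u + t • v‖ ≤ ‖u‖ + t * ‖v‖ := by
    simpa [norm_smul, Real.norm_of_nonneg ht] using norm_add_le u (t • v)
  have hu : ‖u‖ ≤ ‖u‖ * ‖v‖ := le_mul_of_one_le_right (norm_nonneg u) hv
  have hscaled : ‖u‖ * (Λ - 1) * ‖v‖ ≤ t * ‖v‖ := by
    nlinarith [mul_nonneg (by linarith : (0 : ℝ) ≤ Λ) (sq_nonneg ‖v‖)]
  rw [le_div_iff₀ (by linarith)]
  exact le_of_mul_le_mul_right hscaled (by linarith)

end NormedSpace

lemma abs_inner_add_smul_div_sq_sub_le {E : Type*} [NormedAddCommGroup E] [InnerProductSpace ℝ E]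
    (u : E) {v : E} (hv : v ≠ 0) (t : ℝ) :
    |⟪u + t • v, v⟫ / ‖v‖ ^ 2 - t| ≤ ‖u‖ / ‖v‖ := by
  have hv' : 0 < ‖v‖ := norm_pos_iff.mpr hv
  calc |⟪u + t • v, v⟫ / ‖v‖ ^ 2 - t| = |⟪u, v⟫| / ‖v‖ ^ 2 := by
        rw [inner_add_left, real_inner_smul_left, real_inner_self_eq_norm_sq, add_div,
          mul_div_cancel_right₀ _ (pow_pos hv' 2).ne', add_sub_cancel_right, abs_div,
          abs_of_pos (pow_pos hv' 2)]
    _ ≤ ‖u‖ * ‖v‖ / ‖v‖ ^ 2 := by gcongr; exact abs_real_inner_le_norm u v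
    _ = ‖u‖ / ‖v‖ := by field_simp

theorem stmt_2_general {d : ℕ} (a' c : Fin d → ℤ) (hc : c ≠ 0)
    (t : ℝ) (ht : 0 ≤ t) (Λ : ℝ) (hΛ : 1 < Λ)
    (a : EuclideanSpace ℝ (Fin d)) (ha : a = latt a' + t • latt c)
    (h : Λ * (‖latt a'‖ + ‖latt c‖) * ‖latt c‖ ≤ ‖a‖) :
    |‖a‖ / ‖latt c‖ - t| ≤ t / (Λ - 1) ∧
    |(⟪a, latt c⟫ : ℝ) / ‖latt c‖ ^ 2 - t| ≤ t / (Λ - 1) := by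
  subst ha
  have hc1 : 1 ≤ ‖latt c‖ := one_le_norm_latt hc
  have hc0 : latt c ≠ 0 := norm_pos_iff.mp (by linarith)
  have hbound : ‖latt a'‖ / ‖latt c‖ ≤ t / (Λ - 1) :=
    (div_le_self (norm_nonneg _) hc1).trans
      (norm_le_div_sub_one_of_mul_le_norm_add_smul hc1 ht hΛ h)
  exact ⟨(abs_norm_add_smul_div_norm_sub_le _ hc0 ht).trans hbound,
    (abs_inner_add_smul_div_sq_sub_le _ hc0 t).trans hbound⟩

/-- Lemma 2.1(iii): let `a = a' + tc` with `t ≥ 0`, `Λ > 1`.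
If `|a| ≥ Λ(|a'| + |c|)|c|` then `| |a|/|c| − t | ≤ t/(Λ−1)` and
`| ⟨a,c⟩/|c|² − t | ≤ t/(Λ−1)`. -/
theorem stmt_2 {d : ℕ} (hd : 1 ≤ d) (a' c : Fin d → ℤ) (hc : c ≠ 0)
    (t : ℝ) (ht : 0 ≤ t) (Λ : ℝ) (hΛ : 1 < Λ)
    (a : EuclideanSpace ℝ (Fin d)) (ha : a = latt a' + t • latt c)
    (h : Λ * (‖latt a'‖ + ‖latt c‖) * ‖latt c‖ ≤ ‖a‖) :
    |‖a‖ / ‖latt c‖ - t| ≤ t / (Λ - 1) ∧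
    |(⟪a, latt c⟫ : ℝ) / ‖latt c‖ ^ 2 - t| ≤ t / (Λ - 1) :=
  stmt_2_general a' c hc t ht Λ hΛ a ha h
end

section
/- Let d ≥ 1, let c ∈ ℤ^d with c ≠ 0, let Λ be a real number with Λ ≥ 3, and suppose (a,b) ∈ D_Λ^+(c). Then there exists a real number t with t ≥ Λ|c| such that each of the four quantities |a|/|c|, |b|/|c|, ⟨a,c⟩/|c|², ⟨b,c⟩/|c|² lies in the interval [t/2, 3t/2]; in particular each of them is at least Λ|c|/2. -/
/-!
Write `a = a' + t c`. The defining inequality `Λ (|a'| + |c|) |c| ≤ |a|`, combined with the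
triangle inequality `|a| ≤ |a'| + t |c|`, forces both `t ≥ Λ |c|` and `|a'| ≤ t |c| / 2`
once `Λ |c| ≥ 3`. The perturbation `a'` is then too small to move `|a|` away from `t |c|`,
or `⟨a, c⟩` away from `t |c|²`, by more than half.
-/

open scoped RealInnerProductSpace

/-- The Lipschitz domain `D_Λ^+(c)`: the pair `(a, b)` belongs to it iff there are
`a', b' ∈ ℤ^d` and a real `t ≥ 0` with `a = a' + tc`, `b = b' + tc`,
`|a| ≥ Λ(|a'| + |c|)|c|`, `|b| ≥ Λ(|b'| + |c|)|c|`, and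
`|a|/|c| ≥ 2Λ²`, `|b|/|c| ≥ 2Λ²`. -/
def LipDom {d : ℕ} (Λ : ℝ) (c a b : Fin d → ℤ) : Prop :=
  ∃ (a' b' : Fin d → ℤ) (t : ℝ), 0 ≤ t ∧
    latt a = latt a' + t • latt c ∧
    latt b = latt b' + t • latt c ∧
    Λ * (‖latt a'‖ + ‖latt c‖) * ‖latt c‖ ≤ ‖latt a‖ ∧
    Λ * (‖latt b'‖ + ‖latt c‖) * ‖latt c‖ ≤ ‖latt b‖ ∧
    2 * Λ ^ 2 ≤ ‖latt a‖ / ‖latt c‖ ∧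
    2 * Λ ^ 2 ≤ ‖latt b‖ / ‖latt c‖

lemma div_mem_Icc_of_abs_sub_mul_le {x s r : ℝ} (hr : 0 < r) (h : |x - s * r| ≤ s * r / 2) :
    x / r ∈ Set.Icc (s / 2) (3 * s / 2) := by
  obtain ⟨h₁, h₂⟩ := abs_sub_le_iff.mp h
  constructor
  · rw [le_div_iff₀ hr]; linarith
  · rw [div_le_iff₀ hr]; linarith

section Perturbation

variable {E : Type*} [NormedAddCommGroup E] [InnerProductSpace ℝ E] {a a' c : E} {t Λ : ℝ}

lemma abs_norm_sub_le_of_eq_add_smul (ht : 0 ≤ t) (ha : a = a' + t • c) :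
    |‖a‖ - t * ‖c‖| ≤ ‖a'‖ := by
  calc |‖a‖ - t * ‖c‖| = |‖a‖ - ‖t • c‖| := by rw [norm_smul, Real.norm_of_nonneg ht]
    _ ≤ ‖a - t • c‖ := abs_norm_sub_norm_le a (t • c)
    _ = ‖a'‖ := by rw [ha, add_sub_cancel_right]

lemma le_and_two_mul_norm_le_of_eq_add_smul (hΛc : 3 ≤ Λ * ‖c‖) (ht : 0 ≤ t)
    (ha : a = a' + t • c) (h : Λ * (‖a'‖ + ‖c‖) * ‖c‖ ≤ ‖a‖) :
    Λ * ‖c‖ ≤ t ∧ 2 * ‖a'‖ ≤ t * ‖c‖ := by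
  have hc : 0 < ‖c‖ := norm_pos_iff.mpr (by rintro rfl; norm_num at hΛc)
  have htri : ‖a‖ ≤ ‖a'‖ + t * ‖c‖ := by
    linarith [(abs_le.mp (abs_norm_sub_le_of_eq_add_smul ht ha)).2]
  have ha' : 3 * ‖a'‖ ≤ Λ * ‖c‖ * ‖a'‖ := mul_le_mul_of_nonneg_right hΛc (norm_nonneg _)
  have hΛc2 : 0 ≤ Λ * ‖c‖ * ‖c‖ := mul_nonneg (by linarith) hc.le
  refine ⟨le_of_mul_le_mul_right ?_ hc, ?_⟩ <;> linarith [norm_nonneg a']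

lemma abs_inner_sub_le_of_eq_add_smul (ha : a = a' + t • c) :
    |⟪a, c⟫ - t * ‖c‖ ^ 2| ≤ ‖a'‖ * ‖c‖ := by
  rw [ha, inner_add_left, real_inner_smul_left, real_inner_self_eq_norm_sq, add_sub_cancel_right]
  exact abs_real_inner_le_norm a' c

theorem mem_Icc_of_eq_add_smul (hΛc : 3 ≤ Λ * ‖c‖) (ht : 0 ≤ t)
    (ha : a = a' + t • c) (h : Λ * (‖a'‖ + ‖c‖) * ‖c‖ ≤ ‖a‖) :
    Λ * ‖c‖ ≤ t ∧
      ‖a‖ / ‖c‖ ∈ Set.Icc (t / 2) (3 * t / 2) ∧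
      ⟪a, c⟫ / ‖c‖ ^ 2 ∈ Set.Icc (t / 2) (3 * t / 2) := by
  obtain ⟨htc, ha'⟩ := le_and_two_mul_norm_le_of_eq_add_smul hΛc ht ha h
  have hc : 0 < ‖c‖ := norm_pos_iff.mpr (by rintro rfl; norm_num at hΛc)
  refine ⟨htc, div_mem_Icc_of_abs_sub_mul_le hc ?_, div_mem_Icc_of_abs_sub_mul_le (by positivity) ?_⟩
  · linarith [abs_norm_sub_le_of_eq_add_smul ht ha]
  · linarith [abs_inner_sub_le_of_eq_add_smul ha, mul_le_mul_of_nonneg_right ha' hc.le]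

end Perturbation

theorem stmt_4_general {d : ℕ} (c : Fin d → ℤ) (hc : c ≠ 0)
    (Λ : ℝ) (hΛ : 3 ≤ Λ) (a b : Fin d → ℤ) (hab : LipDom Λ c a b) :
    ∃ t : ℝ, Λ * ‖latt c‖ ≤ t ∧
      ‖latt a‖ / ‖latt c‖ ∈ Set.Icc (t / 2) (3 * t / 2) ∧
      ‖latt b‖ / ‖latt c‖ ∈ Set.Icc (t / 2) (3 * t / 2) ∧
      (⟪latt a, latt c⟫ : ℝ) / ‖latt c‖ ^ 2 ∈ Set.Icc (t / 2) (3 * t / 2) ∧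
      (⟪latt b, latt c⟫ : ℝ) / ‖latt c‖ ^ 2 ∈ Set.Icc (t / 2) (3 * t / 2) ∧
      Λ * ‖latt c‖ / 2 ≤ ‖latt a‖ / ‖latt c‖ ∧
      Λ * ‖latt c‖ / 2 ≤ ‖latt b‖ / ‖latt c‖ ∧
      Λ * ‖latt c‖ / 2 ≤ (⟪latt a, latt c⟫ : ℝ) / ‖latt c‖ ^ 2 ∧
      Λ * ‖latt c‖ / 2 ≤ (⟪latt b, latt c⟫ : ℝ) / ‖latt c‖ ^ 2 := by
  obtain ⟨a', b', t, ht, ha, hb, ha', hb', -, -⟩ := hab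
  have hΛc : 3 ≤ Λ * ‖latt c‖ := by nlinarith [one_le_norm_latt hc]
  obtain ⟨htc, haN, haI⟩ := mem_Icc_of_eq_add_smul hΛc ht ha ha'
  obtain ⟨-, hbN, hbI⟩ := mem_Icc_of_eq_add_smul hΛc ht hb hb'
  exact ⟨t, htc, haN, hbN, haI, hbI, by linarith [haN.1], by linarith [hbN.1],
    by linarith [haI.1], by linarith [hbI.1]⟩

/-- Corollary 2.2(i): for `(a,b) ∈ D_Λ^+(c)` with `Λ ≥ 3` there is `t ≥ Λ|c|` such that
`|a|/|c|`, `|b|/|c|`, `⟨a,c⟩/|c|²` and `⟨b,c⟩/|c|²` all lie in `[t/2, 3t/2]`;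
in particular each of them is at least `Λ|c|/2`. -/
theorem stmt_4 {d : ℕ} (hd : 1 ≤ d) (c : Fin d → ℤ) (hc : c ≠ 0)
    (Λ : ℝ) (hΛ : 3 ≤ Λ) (a b : Fin d → ℤ) (hab : LipDom Λ c a b) :
    ∃ t : ℝ, Λ * ‖latt c‖ ≤ t ∧
      ‖latt a‖ / ‖latt c‖ ∈ Set.Icc (t / 2) (3 * t / 2) ∧
      ‖latt b‖ / ‖latt c‖ ∈ Set.Icc (t / 2) (3 * t / 2) ∧
      (⟪latt a, latt c⟫ : ℝ) / ‖latt c‖ ^ 2 ∈ Set.Icc (t / 2) (3 * t / 2) ∧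
      (⟪latt b, latt c⟫ : ℝ) / ‖latt c‖ ^ 2 ∈ Set.Icc (t / 2) (3 * t / 2) ∧
      Λ * ‖latt c‖ / 2 ≤ ‖latt a‖ / ‖latt c‖ ∧
      Λ * ‖latt c‖ / 2 ≤ ‖latt b‖ / ‖latt c‖ ∧
      Λ * ‖latt c‖ / 2 ≤ (⟪latt a, latt c⟫ : ℝ) / ‖latt c‖ ^ 2 ∧
      Λ * ‖latt c‖ / 2 ≤ (⟪latt b, latt c⟫ : ℝ) / ‖latt c‖ ^ 2 :=
  stmt_4_general c hc Λ hΛ a b hab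
end

section
/- Let d ≥ 2. There exists a constant C > 0, depending only on d, with the following property: for every integer Δ ≥ 1 and every c ∈ ℤ^d, if k is the dimension of the affine span over ℝ of the block [c]_Δ (its rank), then for all a, b ∈ [c]_Δ one has |a − b| ≤ C · Δ^{(k+1)!/2}. -/
/-- The pre-equivalence relation generating the block decomposition `E_Δ`:
`a ≈ b` iff `|a| = |b|` (equivalently `|a|² = |b|²`) and `|a − b| ≤ Δ`. -/
noncomputable def preRel {d : ℕ} (Δ : ℕ) (a b : Fin d → ℤ) : Prop :=
  ‖latt a‖ = ‖latt b‖ ∧ ‖latt (a - b)‖ ≤ (Δ : ℝ)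

/-!
Induction on the rank. A block of rank at most one has at most two points, since a line meets a
sphere at most twice, so its diameter is at most `Δ`. For rank `m + 1`, put
`B = C_m Δ^e + Δ`, where `C_m Δ^e` bounds blocks of rank `m`. The differences `x - a` of norm at
most `B` already span the direction of the block: otherwise, with `F` their span, the points
chained to `a` inside `a + F` have rank at most `m`, hence lie within `C_m Δ^e` of `a`, and the
first step of a chain leaving `a + F` lands within `B` of `a` but outside `a + F`. The block lies
on a sphere whose centre `a + w` in its affine span solves a linear system with the Gram matrix of
these short lattice vectors; that determinant is a nonzero integer, so Cramer's rule bounds `w`,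
and with it the radius of the block, by a constant times `B^(m+2)`. The exponents therefore obey
`e_(m+1) = (m + 2) e_m` with `e_1 = 1`, that is `e_m = (m + 1)!/2`.
-/

open Module Matrix Relation EuclideanGeometry
open scoped RealInnerProductSpace

section Determinant

variable {ι : Type*} [Fintype ι] [DecidableEq ι]

lemma abs_le_of_one_le_abs_det {A : Matrix ι ι ℝ} (hdet : 1 ≤ |A.det|) {K : ℝ}
    (hA : ∀ i j, |A i j| ≤ K) {c : ι → ℝ} (hc : ∀ i, |(A *ᵥ c) i| ≤ K) (i : ι) :
    |c i| ≤ (Fintype.card ι).factorial * K ^ Fintype.card ι := by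
  have hcramer : A.cramer (A *ᵥ c) = A.det • c := by
    rw [cramer_eq_adjugate_mulVec, mulVec_mulVec, adjugate_mul, smul_mulVec, one_mulVec]
  have hentry : ∀ j l, |A.updateCol i (A *ᵥ c) j l| ≤ K := by
    intro j l
    rw [updateCol_apply]
    split_ifs
    exacts [hc j, hA j l]
  calc |c i| ≤ |A.det| * |c i| := le_mul_of_one_le_left (abs_nonneg _) hdet
    _ = |A.cramer (A *ᵥ c) i| := by rw [hcramer, Pi.smul_apply, smul_eq_mul, abs_mul]
    _ ≤ _ := by
      rw [cramer_apply]
      simpa [nsmul_eq_mul] using det_le (abv := AbsoluteValue.abs) hentry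

lemma one_le_abs_det_of_forall_eq_intCast {A : Matrix ι ι ℝ} (hA : ∀ i j, ∃ n : ℤ, A i j = n)
    (h : A.det ≠ 0) : 1 ≤ |A.det| := by
  choose Z hZ using hA
  have hdet : A.det = ((Matrix.of Z).det : ℝ) := by
    have : A = (Int.castRingHom ℝ).mapMatrix (Matrix.of Z) := by ext i j; simp [hZ]
    rw [this, ← RingHom.map_det]
    rfl
  rw [hdet] at h ⊢
  exact_mod_cast Int.one_le_abs (by exact_mod_cast h)

end Determinant

section InnerProductSpace

variable {E : Type*} [NormedAddCommGroup E] [InnerProductSpace ℝ E]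

lemma inner_sub_eq_neg_half_sq_of_norm_eq {p q : E} (h : ‖p‖ = ‖q‖) :
    ⟪q, p - q⟫ = -(‖p - q‖ ^ 2) / 2 := by
  rw [inner_sub_right, real_inner_self_eq_norm_sq, real_inner_comm, norm_sub_sq_real, h]
  ring

lemma exists_mem_vectorSpan_inner_sub_eq {S : Set E} [(vectorSpan ℝ S).HasOrthogonalProjection]
    {R : ℝ} (hS : ∀ x ∈ S, ‖x‖ = R) {a : E} (ha : a ∈ S) :
    ∃ w ∈ vectorSpan ℝ S, ∀ x ∈ S, ⟪x - a, w⟫ = ‖x - a‖ ^ 2 / 2 := by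
  set W := vectorSpan ℝ S
  refine ⟨-W.starProjection a, neg_mem (W.starProjection_apply_mem a), fun x hx => ?_⟩
  have hxa : x - a ∈ W := by
    simpa [vsub_eq_sub] using vsub_mem_vectorSpan ℝ hx ha
  have horth : ⟪a - W.starProjection a, x - a⟫ = 0 :=
    W.starProjection_inner_eq_zero a _ hxa
  have hsphere := inner_sub_eq_neg_half_sq_of_norm_eq (by rw [hS x hx, hS a ha] : ‖x‖ = ‖a‖)
  rw [inner_sub_left] at horth
  rw [inner_neg_right, real_inner_comm]
  linarith

lemma norm_le_two_mul_of_inner_eq_half_sq {u w : E} (h : ⟪u, w⟫ = ‖u‖ ^ 2 / 2) :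
    ‖u‖ ≤ 2 * ‖w‖ := by
  have := real_inner_le_norm u w
  nlinarith [norm_nonneg u, norm_nonneg w]

lemma EuclideanGeometry.Cospherical.eq_or_eq_or_eq_of_finrank_vectorSpan_le_one {P : Set E}
    [FiniteDimensional ℝ (vectorSpan ℝ P)] (hP : Cospherical P)
    (hrank : finrank ℝ (vectorSpan ℝ P) ≤ 1) {p₁ p₂ p₃ : E} (h₁ : p₁ ∈ P) (h₂ : p₂ ∈ P)
    (h₃ : p₃ ∈ P) : p₁ = p₂ ∨ p₁ = p₃ ∨ p₂ = p₃ := by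
  by_contra! hne
  have hind := hP.affineIndependent_of_mem_of_ne h₁ h₂ h₃ hne.1 hne.2.1 hne.2.2
  have hsub : vectorSpan ℝ (Set.range ![p₁, p₂, p₃]) ≤ vectorSpan ℝ P :=
    vectorSpan_mono ℝ (by simp [Set.insert_subset_iff, h₁, h₂, h₃])
  have := Submodule.finrank_mono hsub
  rw [hind.finrank_vectorSpan (n := 2) (by simp)] at this
  omega

lemma norm_le_of_forall_inner_eq_half_sq {ι : Type*} [Fintype ι] {v : ι → E}
    (hv : LinearIndependent ℝ v) (hint : ∀ i j, ∃ n : ℤ, ⟪v i, v j⟫ = n) {B : ℝ} (hB : 0 ≤ B)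
    (hvB : ∀ i, ‖v i‖ ≤ B) {w : E} (hw : w ∈ Submodule.span ℝ (Set.range v))
    (hwv : ∀ i, ⟪v i, w⟫ = ‖v i‖ ^ 2 / 2) :
    ‖w‖ ≤ (Fintype.card ι + 1).factorial * B ^ (Fintype.card ι + 1) := by
  classical
  set n := Fintype.card ι
  obtain ⟨c, rfl⟩ := (Submodule.mem_span_range_iff_exists_fun ℝ).mp hw
  have hhalf : ∀ i, ‖v i‖ ^ 2 / 2 ≤ B ^ 2 := fun i => by
    nlinarith [hvB i, norm_nonneg (v i)]
  have hGc : ∀ j, (gram ℝ v *ᵥ c) j = ‖v j‖ ^ 2 / 2 := fun j => by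
    rw [← hwv j]
    simp [gram_apply, mulVec, dotProduct, inner_sum, inner_smul_right, mul_comm]
  have hdet : 1 ≤ |(gram ℝ v).det| :=
    one_le_abs_det_of_forall_eq_intCast hint (det_gram_ne_zero_iff_linearIndependent.mpr hv)
  have hc : ∀ i, |c i| ≤ n.factorial * (B ^ 2) ^ n := by
    refine abs_le_of_one_le_abs_det hdet (fun i j => ?_) (fun j => ?_)
    · calc |⟪v i, v j⟫| ≤ ‖v i‖ * ‖v j‖ := abs_real_inner_le_norm _ _
        _ ≤ B ^ 2 := by rw [sq]; exact mul_le_mul (hvB i) (hvB j) (norm_nonneg _) hB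
    · rw [hGc, abs_of_nonneg (by positivity)]
      exact hhalf j
  have hsq : ‖∑ i, c i • v i‖ ^ 2 ≤ ((n + 1).factorial * B ^ (n + 1)) ^ 2 :=
    calc ‖∑ i, c i • v i‖ ^ 2 = ∑ i, c i * (‖v i‖ ^ 2 / 2) := by
          rw [← real_inner_self_eq_norm_sq, sum_inner]
          simp only [real_inner_smul_left, hwv]
      _ ≤ ∑ _i : ι, n.factorial * (B ^ 2) ^ n * B ^ 2 := by
          refine Finset.sum_le_sum fun i _ => ?_
          exact mul_le_mul ((le_abs_self _).trans (hc i)) (hhalf i) (by positivity)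
            (by positivity)
      _ = (n * n.factorial : ℕ) * (B ^ (n + 1)) ^ 2 := by
          rw [Finset.sum_const, Finset.card_univ, nsmul_eq_mul]; push_cast; ring
      _ ≤ ((n + 1).factorial : ℕ) ^ 2 * (B ^ (n + 1)) ^ 2 := by
          gcongr
          norm_cast
          calc n * n.factorial ≤ (n + 1).factorial := by
                rw [Nat.factorial_succ]; gcongr; omega
            _ ≤ (n + 1).factorial ^ 2 := Nat.le_self_pow two_ne_zero _
      _ = ((n + 1).factorial * B ^ (n + 1)) ^ 2 := by ring
  exact (pow_le_pow_iff_left₀ (norm_nonneg _) (by positivity) two_ne_zero).mp hsq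

lemma norm_sub_le_of_vectorSpan_le_span [FiniteDimensional ℝ E] {P : Set E} {R : ℝ}
    (hR : ∀ x ∈ P, ‖x‖ = R) (hint : ∀ x ∈ P, ∀ y ∈ P, ∃ n : ℤ, ⟪x, y⟫ = n) {a : E}
    (ha : a ∈ P) {B : ℝ} (hB : 1 ≤ B) {N : ℕ} (hN : finrank ℝ (vectorSpan ℝ P) ≤ N)
    (hspan : vectorSpan ℝ P ≤ Submodule.span ℝ ((· - a) '' {x ∈ P | ‖x - a‖ ≤ B}))
    {x : E} (hx : x ∈ P) :
    ‖x - a‖ ≤ 2 * (N + 1).factorial * B ^ (N + 1) := by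
  obtain ⟨w, hwP, hw⟩ := exists_mem_vectorSpan_inner_sub_eq hR ha
  obtain ⟨t, hts, htspan, htli⟩ :=
    exists_linearIndependent ℝ ((· - a) '' {x ∈ P | ‖x - a‖ ≤ B})
  have : Fintype t := htli.setFinite.fintype
  have hsub : ∀ y ∈ P, y - a ∈ vectorSpan ℝ P := fun y hy => by
    simpa [vsub_eq_sub] using vsub_mem_vectorSpan ℝ hy ha
  have hcard : Fintype.card t ≤ N := by
    rw [← finrank_span_eq_card htli, Subtype.range_coe, htspan]
    refine le_trans (Submodule.finrank_mono ?_) hN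
    rw [Submodule.span_le]
    rintro _ ⟨y, ⟨hy, -⟩, rfl⟩
    exact hsub y hy
  have hshort : ∀ u : t, ∃ y ∈ P, (u : E) = y - a ∧ ‖(u : E)‖ ≤ B := fun u => by
    obtain ⟨y, ⟨hy, hyB⟩, hu⟩ := hts u.2
    exact ⟨y, hy, hu.symm, hu ▸ hyB⟩
  choose y hyP hyu hyB using hshort
  have hint' : ∀ u v : t, ∃ n : ℤ, ⟪(u : E), v⟫ = n := fun u v => by
    obtain ⟨n₁, h₁⟩ := hint _ (hyP u) _ (hyP v)
    obtain ⟨n₂, h₂⟩ := hint _ (hyP u) _ ha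
    obtain ⟨n₃, h₃⟩ := hint _ ha _ (hyP v)
    obtain ⟨n₄, h₄⟩ := hint _ ha _ ha
    refine ⟨n₁ - n₂ - n₃ + n₄, ?_⟩
    simp only [hyu, inner_sub_left, inner_sub_right, h₁, h₂, h₃, h₄]
    push_cast
    ring
  have hwt : w ∈ Submodule.span ℝ (Set.range ((↑) : t → E)) := by
    rw [Subtype.range_coe, htspan]
    exact hspan hwP
  have hwbound := norm_le_of_forall_inner_eq_half_sq htli hint' (by linarith) hyB hwt
    fun u => by rw [hyu u, hw _ (hyP u)]
  calc ‖x - a‖ ≤ 2 * ‖w‖ := norm_le_two_mul_of_inner_eq_half_sq (hw x hx)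
    _ ≤ 2 * ((Fintype.card t + 1).factorial * B ^ (Fintype.card t + 1)) := by gcongr
    _ ≤ 2 * ((N + 1).factorial * B ^ (N + 1)) := by gcongr
    _ = 2 * (N + 1).factorial * B ^ (N + 1) := by ring

end InnerProductSpace

namespace Relation.ReflTransGen

variable {α : Type*} {r : α → α → Prop} {p : α → Prop} {a b : α}

lemma pred_of_restrict (h : ReflTransGen (fun u v => r u v ∧ p v) a b) (ha : p a) : p b := by
  induction h with
  | refl => exact ha
  | tail _ hbc => exact hbc.2

lemma exists_exit (hab : ReflTransGen r a b) (ha : p a) (hb : ¬p b) :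
    ∃ x y, ReflTransGen (fun u v => r u v ∧ p v) a x ∧ r x y ∧ ¬p y := by
  suffices ∀ b, ReflTransGen r a b → ReflTransGen (fun u v => r u v ∧ p v) a b ∨
      ∃ x y, ReflTransGen (fun u v => r u v ∧ p v) a x ∧ r x y ∧ ¬p y from
    (this b hab).resolve_left fun h => hb (h.pred_of_restrict ha)
  intro b hab
  induction hab with
  | refl => exact Or.inl .refl
  | @tail b c _ hbc ih =>
    refine ih.elim (fun hb => ?_) Or.inr
    by_cases hc : p c
    · exact Or.inl (hb.tail ⟨hbc, hc⟩)
    · exact Or.inr ⟨b, c, hb, hbc, hc⟩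

end Relation.ReflTransGen

variable {d : ℕ}

lemma latt_sub (a b : Fin d → ℤ) : latt (a - b) = latt a - latt b := by
  ext i
  simp [latt]

lemma inner_latt (a b : Fin d → ℤ) : ⟪latt a, latt b⟫ = ((a ⬝ᵥ b : ℤ) : ℝ) := by
  simp [latt, dotProduct, PiLp.inner_apply, mul_comm]

instance (Δ : ℕ) : Std.Symm (preRel (d := d) Δ) where
  symm _ _ h := ⟨h.1.symm, by rw [latt_sub, norm_sub_rev, ← latt_sub]; exact h.2⟩

lemma Relation.ReflTransGen.norm_latt_eq {Δ : ℕ} {r : (Fin d → ℤ) → (Fin d → ℤ) → Prop}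
    (hr : Subrelation r (preRel Δ)) {a b : Fin d → ℤ} (h : ReflTransGen r a b) :
    ‖latt b‖ = ‖latt a‖ := by
  induction h with
  | refl => rfl
  | tail _ hbc ih => exact (hr hbc).1.symm.trans ih

-- Quantifying over subrelations `r` of `preRel Δ` lets the induction confine chains to an
-- affine subspace.
def RadiusBound (d m : ℕ) (C : ℝ) (e : ℕ) : Prop :=
  ∀ Δ : ℕ, 1 ≤ Δ → ∀ r : (Fin d → ℤ) → (Fin d → ℤ) → Prop, Subrelation r (preRel Δ) →
    ∀ a, finrank ℝ (vectorSpan ℝ (latt '' {x | ReflTransGen r a x})) ≤ m →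
      ∀ b, ReflTransGen r a b → ‖latt b - latt a‖ ≤ C * (Δ : ℝ) ^ e

lemma radiusBound_zero : RadiusBound d 0 1 0 := by
  intro Δ _ r _ a hrank b hb
  have hbot := Submodule.finrank_eq_zero.mp (Nat.le_zero.mp hrank)
  have hb' : latt b ∈ latt '' {x | ReflTransGen r a x} := ⟨b, hb, rfl⟩
  have ha' : latt a ∈ latt '' {x | ReflTransGen r a x} := ⟨a, .refl, rfl⟩
  have hmem := vsub_mem_vectorSpan ℝ hb' ha'
  rw [hbot, Submodule.mem_bot, vsub_eq_sub] at hmem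
  simp [hmem]

lemma radiusBound_one : RadiusBound d 1 1 1 := by
  intro Δ _ r hr a hrank b hb
  set P := latt '' {x | ReflTransGen r a x}
  have hmem : ∀ {x}, ReflTransGen r a x → latt x ∈ P := fun hx => Set.mem_image_of_mem latt hx
  have hsphere : Cospherical P := by
    refine ⟨0, ‖latt a‖, ?_⟩
    rintro _ ⟨x, hx, rfl⟩
    rw [dist_zero_right]
    exact hx.norm_latt_eq hr
  induction hb with
  | refl => simp
  | @tail y z hy hyz ih =>
    have hstep : ‖latt z - latt y‖ ≤ Δ := by
      rw [norm_sub_rev, ← latt_sub]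
      exact (hr hyz).2
    rcases hsphere.eq_or_eq_or_eq_of_finrank_vectorSpan_le_one hrank (hmem .refl) (hmem hy)
      (hmem (hy.tail hyz)) with h | h | h
    · simpa [h] using hstep
    · simp [h]
    · simpa [← h] using ih

lemma RadiusBound.vectorSpan_le_span {m : ℕ} {C : ℝ} {e : ℕ} (h : RadiusBound d m C e) {Δ : ℕ}
    (hΔ : 1 ≤ Δ) {r : (Fin d → ℤ) → (Fin d → ℤ) → Prop} (hr : Subrelation r (preRel Δ))
    {a : Fin d → ℤ} (hrank : finrank ℝ (vectorSpan ℝ (latt '' {x | ReflTransGen r a x})) ≤ m + 1) :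
    vectorSpan ℝ (latt '' {x | ReflTransGen r a x}) ≤ Submodule.span ℝ ((· - latt a) ''
      {x ∈ latt '' {x | ReflTransGen r a x} | ‖x - latt a‖ ≤ C * (Δ : ℝ) ^ e + Δ}) := by
  set S := {x | ReflTransGen r a x}
  set F := Submodule.span ℝ ((· - latt a) '' {x ∈ latt '' S | ‖x - latt a‖ ≤ C * (Δ : ℝ) ^ e + Δ})
  have hvectorSpan : ∀ {T : Set (Fin d → ℤ)}, a ∈ T →
      vectorSpan ℝ (latt '' T) = Submodule.span ℝ ((· - latt a) '' (latt '' T)) := fun ha => by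
    rw [vectorSpan_eq_span_vsub_set_right ℝ (Set.mem_image_of_mem latt ha)]
    rfl
  have hFW : F ≤ vectorSpan ℝ (latt '' S) := by
    rw [hvectorSpan (T := S) .refl]
    exact Submodule.span_mono (Set.image_mono fun _ hx => hx.1)
  rw [hvectorSpan (T := S) .refl, Submodule.span_le]
  rintro _ ⟨_, ⟨z, hz, rfl⟩, rfl⟩
  by_contra hzF
  have hFlt : finrank ℝ F < finrank ℝ (vectorSpan ℝ (latt '' S)) :=
    Submodule.finrank_lt_finrank_of_lt (lt_of_le_of_ne hFW fun hWF => hzF <| hWF ▸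
      vsub_mem_vectorSpan ℝ (⟨z, hz, rfl⟩ : latt z ∈ latt '' S) ⟨a, .refl, rfl⟩)
  set p : (Fin d → ℤ) → Prop := fun v => latt v - latt a ∈ F
  have hrankF :
      finrank ℝ (vectorSpan ℝ (latt '' {x | ReflTransGen (fun u v => r u v ∧ p v) a x})) ≤ m := by
    refine le_trans (Submodule.finrank_mono (?_ : _ ≤ F)) (by omega)
    rw [hvectorSpan .refl, Submodule.span_le]
    rintro _ ⟨_, ⟨x, hx, rfl⟩, rfl⟩
    exact hx.pred_of_restrict (by simp [p])
  obtain ⟨x, y, hx, hxy, hy⟩ := hz.exists_exit (p := p) (by simp [p]) hzF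
  have hyS : ReflTransGen r a y := (ReflTransGen.mono (fun _ _ h => h.1) _ _ hx).tail hxy
  refine hy (Submodule.subset_span ⟨latt y, ⟨⟨y, hyS, rfl⟩, ?_⟩, rfl⟩)
  have hxa : ‖latt x - latt a‖ ≤ C * (Δ : ℝ) ^ e := h Δ hΔ _ (fun h => hr h.1) a hrankF x hx
  have hyx : ‖latt y - latt x‖ ≤ Δ := by
    rw [norm_sub_rev, ← latt_sub]
    exact (hr hxy).2
  linarith [norm_sub_le_norm_sub_add_norm_sub (latt y) (latt x) (latt a)]

lemma RadiusBound.succ {m : ℕ} {C : ℝ} {e : ℕ} (h : RadiusBound d m C e) (hC : 0 ≤ C)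
    (he : 1 ≤ e) :
    RadiusBound d (m + 1) (2 * (m + 2).factorial * (C + 1) ^ (m + 2)) ((m + 2) * e) := by
  intro Δ hΔ r hr a hrank b hb
  have hΔ1 : (1 : ℝ) ≤ Δ := by exact_mod_cast hΔ
  have hΔe : (Δ : ℝ) ≤ (Δ : ℝ) ^ e := le_self_pow₀ hΔ1 (by omega)
  have hB1 : 1 ≤ C * (Δ : ℝ) ^ e + Δ := by nlinarith [pow_nonneg (zero_le_one.trans hΔ1) e]
  have hBle : C * (Δ : ℝ) ^ e + Δ ≤ (C + 1) * (Δ : ℝ) ^ e := by linarith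
  have hsphere : ∀ p ∈ latt '' {x | ReflTransGen r a x}, ‖p‖ = ‖latt a‖ := by
    rintro _ ⟨x, hx, rfl⟩
    exact hx.norm_latt_eq hr
  have hint : ∀ p ∈ latt '' {x | ReflTransGen r a x}, ∀ q ∈ latt '' {x | ReflTransGen r a x},
      ∃ n : ℤ, ⟪p, q⟫ = n := by
    rintro _ ⟨x, -, rfl⟩ _ ⟨y, -, rfl⟩
    exact ⟨_, inner_latt x y⟩
  calc ‖latt b - latt a‖ ≤ 2 * (m + 2).factorial * (C * (Δ : ℝ) ^ e + Δ) ^ (m + 2) :=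
        norm_sub_le_of_vectorSpan_le_span hsphere hint ⟨a, .refl, rfl⟩ hB1 hrank
          (h.vectorSpan_le_span hΔ hr hrank) ⟨b, hb, rfl⟩
    _ ≤ 2 * (m + 2).factorial * ((C + 1) * (Δ : ℝ) ^ e) ^ (m + 2) := by gcongr
    _ = 2 * (m + 2).factorial * (C + 1) ^ (m + 2) * (Δ : ℝ) ^ ((m + 2) * e) := by
      rw [mul_pow, ← pow_mul, mul_comm e]
      ring

lemma Nat.factorial_succ_div_two {m : ℕ} (hm : 2 ≤ m) :
    (m + 1).factorial / 2 = (m + 1) * (m.factorial / 2) := by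
  rw [Nat.factorial_succ, Nat.mul_div_assoc _ (Nat.dvd_factorial two_pos hm)]

theorem exists_radiusBound (d : ℕ) : ∀ m, ∃ C, 0 < C ∧ RadiusBound d m C ((m + 1).factorial / 2)
  | 0 => ⟨1, one_pos, radiusBound_zero⟩
  | 1 => ⟨1, one_pos, radiusBound_one⟩
  | m + 2 => by
    obtain ⟨C, hC, h⟩ := exists_radiusBound d (m + 1)
    have he : 1 ≤ (m + 2).factorial / 2 :=
      (Nat.le_div_iff_mul_le two_pos).mpr ((Nat.self_le_factorial (m + 2)).trans' (by omega))
    rw [Nat.factorial_succ_div_two (by omega)]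
    exact ⟨_, by positivity, h.succ hC.le he⟩

theorem stmt_8_general (d : ℕ) :
    ∃ C : ℝ, 0 < C ∧ ∀ Δ : ℕ, 1 ≤ Δ → ∀ c : Fin d → ℤ, ∀ k : ℕ,
      k = Module.finrank ℝ
        (affineSpan ℝ (latt '' {x | Relation.EqvGen (preRel Δ) c x})).direction →
      ∀ a b : Fin d → ℤ, Relation.EqvGen (preRel Δ) c a →
        Relation.EqvGen (preRel Δ) c b →
        ‖latt (a - b)‖ ≤ C * (Δ : ℝ) ^ ((Nat.factorial (k + 1) : ℝ) / 2) := by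
  choose C hC hbound using exists_radiusBound d
  refine ⟨∑ m ∈ Finset.range (d + 1), C m, Finset.sum_pos (fun m _ => hC m) ⟨0, by simp⟩, ?_⟩
  intro Δ hΔ c k hk a b ha hb
  have hblock : {x | EqvGen (preRel Δ) c x} = {x | ReflTransGen (preRel Δ) a x} := by
    ext x
    change EqvGen _ c x ↔ ReflTransGen _ a x
    rw [← EqvGen.eqvGen_eq_reflTransGen]
    exact ⟨(ha.symm _ _).trans _ _ _, ha.trans _ _ _⟩
  rw [direction_affineSpan, hblock] at hk
  have hkd : k ≤ d := hk ▸ (Submodule.finrank_le _).trans finrank_euclideanSpace_fin.le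
  have hΔ1 : (1 : ℝ) ≤ Δ := by exact_mod_cast hΔ
  calc ‖latt (a - b)‖ = ‖latt b - latt a‖ := by rw [latt_sub, norm_sub_rev]
    _ ≤ C k * (Δ : ℝ) ^ ((k + 1).factorial / 2) :=
      hbound k Δ hΔ _ (fun h => h) a hk.ge b
        (show b ∈ {x | ReflTransGen (preRel Δ) a x} from hblock ▸ hb)
    _ ≤ (∑ m ∈ Finset.range (d + 1), C m) * (Δ : ℝ) ^ (((k + 1).factorial : ℝ) / 2) := by
      refine mul_le_mul ?_ ?_ (by positivity) (Finset.sum_nonneg fun m _ => (hC m).le)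
      · exact Finset.single_le_sum (f := C) (fun m _ => (hC m).le)
          (Finset.mem_range.mpr (by omega))
      · rw [← Real.rpow_natCast]
        exact Real.rpow_le_rpow_of_exponent_le hΔ1 Nat.cast_div_le

/-- Proposition 4.1: there is a constant `C > 0` depending only on `d` such that,
for every `Δ ≥ 1` and every `c ∈ ℤ^d`, if `k` is the rank of the block `[c]_Δ`
(the dimension of the affine span over `ℝ` of the block), then the diameter of the
block is at most `C Δ^{(k+1)!/2}`. -/
theorem stmt_8 (d : ℕ) (hd : 2 ≤ d) :
    ∃ C : ℝ, 0 < C ∧ ∀ Δ : ℕ, 1 ≤ Δ → ∀ c : Fin d → ℤ, ∀ k : ℕ,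
      k = Module.finrank ℝ
        (affineSpan ℝ (latt '' {x | Relation.EqvGen (preRel Δ) c x})).direction →
      ∀ a b : Fin d → ℤ, Relation.EqvGen (preRel Δ) c a →
        Relation.EqvGen (preRel Δ) c b →
        ‖latt (a - b)‖ ≤ C * (Δ : ℝ) ^ ((Nat.factorial (k + 1) : ℝ) / 2) :=
  stmt_8_general d
end

section
/- Let d ≥ 2. There exist constants C₁, C₂ > 0, depending only on d, with the following property: for every real Λ ≥ 1 and every a ∈ ℤ^d with |a| ≥ C₁ Λ^{2d−1}, there exist c ∈ ℤ^d with 0 < |c| ≤ C₂ Λ^{d−1}, a point a' ∈ ℤ^d, and a real number t ≥ 0 such that a = a' + tc, |a| ≥ Λ(|a'| + |c|)|c|, and ⟨a,c⟩ ≥ 0. -/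
open scoped RealInnerProductSpace

/-!
Pick a coordinate `i` with `|aᵢ| = ‖a‖_∞`. Dirichlet's simultaneous approximation, applied to the
`d - 1` ratios `aⱼ / |aᵢ|` (`j ≠ i`) with `N ≈ 4dΛ`, yields `q ≤ N ^ (d - 1)` and an integer
vector `c` with `‖|aᵢ| c - q a‖_∞ ≤ |aᵢ| / N`: a short lattice vector almost parallel to `a`.
Then `⟨a, c⟩ ≥ 0`, and `a' = a - ⌊|aᵢ| / q⌋ c` is a lattice point with
`‖a'‖ ≤ √d ‖a‖ / (qN) + ‖c‖`, so `Λ (‖a'‖ + ‖c‖) ‖c‖ ≲ ‖a‖ / 2 + Λ N ^ (2d - 2)`;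
the threshold `‖a‖ ≥ C₁ Λ ^ (2d - 1)` absorbs the second term.
-/

theorem exists_nat_forall_abs_mul_sub_int_lt {ι : Type*} [Fintype ι] [DecidableEq ι] (x : ι → ℝ)
    {N : ℕ} (hN : 0 < N) :
    ∃ q : ℕ, 0 < q ∧ q ≤ N ^ Fintype.card ι ∧
      ∃ p : ι → ℤ, ∀ j, |q * x j - p j| < 1 / N := by
  have hN' : (0 : ℝ) < N := Nat.cast_pos.mpr hN
  -- pigeonhole: two of the points `fract (k • x)`, `k ≤ N ^ |ι|`, share a cube of side `1 / N`
  let cell : Fin (N ^ Fintype.card ι + 1) → ι → Fin N := fun k j =>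
    ⟨⌊Int.fract (k * x j) * N⌋₊, (Nat.floor_lt (by positivity)).2 <| by
      simpa using mul_lt_mul_of_pos_right (Int.fract_lt_one _) hN'⟩
  obtain ⟨k₁, k₂, hne, hcell⟩ := Fintype.exists_ne_map_eq_of_card_lt cell (by simp)
  wlog hlt : k₁ < k₂ generalizing k₁ k₂
  · exact this k₂ k₁ hne.symm hcell.symm (lt_of_le_of_ne (not_lt.1 hlt) hne.symm)
  refine ⟨k₂ - k₁, by omega, by omega, fun j => ⌊(k₂ : ℝ) * x j⌋ - ⌊(k₁ : ℝ) * x j⌋,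
    fun j => ?_⟩
  have hfloor : ⌊Int.fract (k₂ * x j) * N⌋ = ⌊Int.fract (k₁ * x j) * N⌋ := by
    have h := congrArg Fin.val (congrFun hcell j)
    simp only [cell] at h
    rw [← Int.natCast_floor_eq_floor (by positivity), ← Int.natCast_floor_eq_floor (by positivity),
      h]
  have hclose := Int.abs_sub_lt_one_of_floor_eq_floor hfloor
  rw [← sub_mul, abs_mul, abs_of_pos hN', ← lt_div_iff₀ hN'] at hclose
  refine lt_of_eq_of_lt (congrArg abs ?_) hclose
  rw [← Int.self_sub_floor, ← Int.self_sub_floor, Nat.cast_sub hlt.le]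
  push_cast
  ring

theorem exists_int_approx_direction {ι : Type*} [Fintype ι] [DecidableEq ι] (a : ι → ℤ) {i : ι}
    (hai : a i ≠ 0) {N : ℕ} (hN : 0 < N) :
    ∃ q : ℕ, 0 < q ∧ q ≤ N ^ (Fintype.card ι - 1) ∧ ∃ c : ι → ℤ, c ≠ 0 ∧
      ∀ j, |(|(a i : ℝ)|) * c j - q * a j| ≤ |(a i : ℝ)| / N := by
  set A := |(a i : ℝ)|
  have hA : 0 < A := by positivity
  obtain ⟨q, hq, hqN, p, hp⟩ :=
    exists_nat_forall_abs_mul_sub_int_lt (fun j : {j // j ≠ i} => (a j : ℝ) / A) hN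
  rw [Fintype.card_subtype_compl, Fintype.card_subtype_eq] at hqN
  refine ⟨q, hq, hqN, fun j => if h : j = i then (a i).sign * q else p ⟨j, h⟩, ?_, fun j => ?_⟩
  · intro h
    simpa [hai, hq.ne'] using congrFun h i
  rcases eq_or_ne j i with rfl | h
  · have hsign : A * (a j).sign = a j := by
      simp only [A, ← Int.cast_abs, ← Int.cast_mul, mul_comm |a j|, Int.sign_mul_abs]
    simp only [dif_pos]
    push_cast
    rw [← mul_assoc, hsign, mul_comm, sub_self, abs_zero]
    positivity
  · simp only [dif_neg h]
    have hj := (hp ⟨j, h⟩).le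
    calc |A * p ⟨j, h⟩ - q * a j| = A * |q * (a j / A) - p ⟨j, h⟩| := by
          rw [← abs_of_pos hA, ← abs_mul, abs_of_pos hA, ← abs_neg]
          congr 1
          field_simp
          ring
      _ ≤ A * (1 / N) := mul_le_mul_of_nonneg_left hj hA.le
      _ = A / N := mul_one_div A N

theorem EuclideanSpace.norm_le_sqrt_card_mul {ι : Type*} [Fintype ι] (x : EuclideanSpace ℝ ι)
    {M : ℝ} (hM : 0 ≤ M) (h : ∀ j, |x j| ≤ M) : ‖x‖ ≤ √(Fintype.card ι) * M := by
  rw [EuclideanSpace.norm_eq, ← Real.sqrt_sq hM, ← Real.sqrt_mul (Nat.cast_nonneg _)]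
  refine Real.sqrt_le_sqrt ?_
  calc ∑ j, ‖x j‖ ^ 2 ≤ ∑ _j : ι, M ^ 2 :=
        Finset.sum_le_sum fun j _ => pow_le_pow_left₀ (norm_nonneg _) (h j) 2
    _ = Fintype.card ι * M ^ 2 := by simp

theorem inner_nonneg_of_norm_smul_sub_smul_le {E : Type*} [NormedAddCommGroup E]
    [InnerProductSpace ℝ E] {a c : E} {A q : ℝ} (hA : 0 < A) (h : ‖A • c - q • a‖ ≤ q * ‖a‖) :
    0 ≤ ⟪a, c⟫ := by
  have hsplit : A * ⟪a, c⟫ = q * ‖a‖ ^ 2 + ⟪a, A • c - q • a⟫ := by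
    rw [inner_sub_right, inner_smul_right, inner_smul_right, real_inner_self_eq_norm_sq]
    ring
  have hcs := neg_le_of_abs_le (abs_real_inner_le_norm a (A • c - q • a))
  refine (mul_nonneg_iff_of_pos_left hA).1 ?_
  nlinarith [mul_le_mul_of_nonneg_left h (norm_nonneg a)]

theorem norm_sub_smul_le {E : Type*} [NormedAddCommGroup E] [NormedSpace ℝ E] (a c : E)
    {A q : ℝ} (hq : 0 < q) (T : ℝ) :
    ‖a - T • c‖ ≤ ‖A • c - q • a‖ / q + |A / q - T| * ‖c‖ := by
  have hsplit : a - T • c = (A / q - T) • c - q⁻¹ • (A • c - q • a) := by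
    rw [smul_sub, smul_smul, smul_smul, inv_mul_cancel₀ hq.ne', one_smul, sub_smul, div_eq_inv_mul]
    abel
  calc ‖a - T • c‖ ≤ ‖(A / q - T) • c‖ + ‖q⁻¹ • (A • c - q • a)‖ := hsplit ▸ norm_sub_le _ _
    _ = ‖A • c - q • a‖ / q + |A / q - T| * ‖c‖ := by
      rw [norm_smul, norm_smul, Real.norm_eq_abs, Real.norm_eq_abs, abs_inv, abs_of_pos hq]
      ring

@[simp]
theorem latt_zero {d : ℕ} : latt (0 : Fin d → ℤ) = 0 := by
  ext
  simp [latt]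

theorem latt_sub_nsmul {d : ℕ} (a c : Fin d → ℤ) (T : ℕ) :
    latt (a - T • c) = latt a - (T : ℝ) • latt c := by
  ext j
  simp [latt]

theorem abs_le_norm_latt {d : ℕ} (v : Fin d → ℤ) (j : Fin d) : |(v j : ℝ)| ≤ ‖latt v‖ := by
  simpa [latt] using PiLp.norm_apply_le (latt v) j

theorem exists_short_approx_direction {d : ℕ} {a : Fin d → ℤ} (ha : a ≠ 0) {N : ℕ}
    (hN : √(d : ℝ) ≤ N) :
    ∃ (A : ℝ) (q : ℕ) (c : Fin d → ℤ), 0 < A ∧ 0 < q ∧ q ≤ N ^ (d - 1) ∧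
      c ≠ 0 ∧ ‖latt c‖ ≤ 2 * √(d : ℝ) * q ∧
      ‖A • latt c - (q : ℝ) • latt a‖ ≤ √(d : ℝ) * ‖latt a‖ / N := by
  have : Nonempty (Fin d) := not_isEmpty_iff.1 fun _ => ha (Subsingleton.elim _ _)
  obtain ⟨i, hi⟩ := Finite.exists_max fun j => |a j|
  have hai : a i ≠ 0 := fun h₀ => ha <| funext fun j =>
    abs_nonpos_iff.1 <| by simpa [h₀] using hi j
  have hN₁ : (1 : ℝ) ≤ N := le_trans (Real.one_le_sqrt.2 (Nat.one_le_cast.2 i.pos)) hN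
  obtain ⟨q, hq, hqN, c, hc₀, happrox⟩ :=
    exists_int_approx_direction a hai (N := N) (by exact_mod_cast zero_lt_one.trans_le hN₁)
  rw [Fintype.card_fin] at hqN
  set A := |(a i : ℝ)|
  have hA : 0 < A := by positivity
  have hcj : ∀ j, |(c j : ℝ)| ≤ 2 * q := by
    intro j
    have haj : |(a j : ℝ)| ≤ A := by simp only [A, ← Int.cast_abs]; exact_mod_cast hi j
    have htri := abs_sub_abs_le_abs_sub (A * c j) (q * a j)
    rw [abs_mul, abs_mul, abs_of_pos hA, Nat.abs_cast] at htri
    have hAN : A / N ≤ A := div_le_self hA.le hN₁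
    have hq₁ : (1 : ℝ) ≤ q := by exact_mod_cast hq
    refine le_of_mul_le_mul_left ?_ hA
    nlinarith [happrox j, mul_le_mul_of_nonneg_left haj (by positivity : (0 : ℝ) ≤ q)]
  refine ⟨A, q, c, hA, hq, hqN, hc₀, ?_, ?_⟩
  · calc ‖latt c‖ ≤ √(Fintype.card (Fin d) : ℝ) * (2 * q) :=
          EuclideanSpace.norm_le_sqrt_card_mul _ (by positivity) (by simpa [latt] using hcj)
      _ = 2 * √(d : ℝ) * q := by rw [Fintype.card_fin]; ring
  · calc ‖A • latt c - (q : ℝ) • latt a‖ ≤ √(Fintype.card (Fin d) : ℝ) * (A / N) :=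
          EuclideanSpace.norm_le_sqrt_card_mul _ (by positivity) (by simpa [latt] using happrox)
      _ ≤ √(d : ℝ) * ‖latt a‖ / N := by
        rw [Fintype.card_fin, mul_div_assoc]
        gcongr
        exact abs_le_norm_latt a i

theorem exists_short_direction_decomposition_of_sqrt_le {d : ℕ} {a : Fin d → ℤ} (ha : a ≠ 0)
    {N : ℕ} (hN : √(d : ℝ) ≤ N) :
    ∃ (q : ℕ) (c a' : Fin d → ℤ) (T : ℕ), q ≤ N ^ (d - 1) ∧ c ≠ 0 ∧
      latt a = latt a' + (T : ℝ) • latt c ∧ ‖latt c‖ ≤ 2 * √(d : ℝ) * q ∧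
      (‖latt a'‖ + ‖latt c‖) * ‖latt c‖ ≤ 2 * d * ‖latt a‖ / N + 8 * d * q ^ 2 ∧
      0 ≤ ⟪latt a, latt c⟫ := by
  obtain ⟨A, q, c, hA, hq, hqN, hc₀, hc, herr⟩ := exists_short_approx_direction ha hN
  set R := ‖latt a‖
  set T := ⌊A / q⌋₊
  have hT : |A / q - T| ≤ 1 := by
    have h₁ := Nat.floor_le (div_nonneg hA.le (Nat.cast_nonneg q))
    have h₂ := Nat.lt_floor_add_one (A / q)
    exact abs_le.2 ⟨by linarith, by linarith⟩
  have ha' : ‖latt (a - T • c)‖ ≤ √(d : ℝ) * R / N / q + ‖latt c‖ := by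
    rw [latt_sub_nsmul]
    calc _ ≤ ‖A • latt c - (q : ℝ) • latt a‖ / q + |A / q - T| * ‖latt c‖ :=
          norm_sub_smul_le _ _ (by positivity) _
      _ ≤ √(d : ℝ) * R / N / q + 1 * ‖latt c‖ := by gcongr
      _ = _ := by rw [one_mul]
  have hd₀ : 0 < d := Nat.pos_of_ne_zero <| by rintro rfl; exact ha (Subsingleton.elim _ _)
  have hN₀ : (0 : ℝ) < N := (Real.sqrt_pos.2 (by positivity)).trans_le hN
  refine ⟨q, c, a - T • c, T, hqN, hc₀, by rw [latt_sub_nsmul, sub_add_cancel], hc, ?_,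
    inner_nonneg_of_norm_smul_sub_smul_le hA (herr.trans ?_)⟩
  · have hd : √(d : ℝ) ^ 2 = d := Real.sq_sqrt (Nat.cast_nonneg d)
    calc (‖latt (a - T • c)‖ + ‖latt c‖) * ‖latt c‖
        ≤ (√(d : ℝ) * R / N / q + 2 * ‖latt c‖) * ‖latt c‖ := by gcongr ?_ * _; linarith
      _ = √(d : ℝ) * R / N / q * ‖latt c‖ + 2 * ‖latt c‖ ^ 2 := by ring
      _ ≤ √(d : ℝ) * R / N / q * (2 * √(d : ℝ) * q) + 2 * (2 * √(d : ℝ) * q) ^ 2 := by gcongr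
      _ = 2 * √(d : ℝ) ^ 2 * R / N + 8 * √(d : ℝ) ^ 2 * q ^ 2 := by field_simp; ring
      _ = 2 * d * R / N + 8 * d * q ^ 2 := by rw [hd]
  · have hq₁ : (1 : ℝ) ≤ q := by exact_mod_cast hq
    calc √(d : ℝ) * R / N ≤ R := div_le_of_le_mul₀ hN₀.le (norm_nonneg _)
          (by rw [mul_comm R]; gcongr)
      _ ≤ q * R := le_mul_of_one_le_left (norm_nonneg _) hq₁

theorem exists_short_direction_decomposition {d : ℕ} {Λ : ℝ} (hΛ : 1 ≤ Λ) {a : Fin d → ℤ}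
    (ha : a ≠ 0) :
    ∃ (c a' : Fin d → ℤ) (T : ℕ), c ≠ 0 ∧
      ‖latt c‖ ≤ 2 * √(d : ℝ) * (5 * d) ^ (d - 1) * Λ ^ (d - 1) ∧
      latt a = latt a' + (T : ℝ) • latt c ∧
      Λ * (‖latt a'‖ + ‖latt c‖) * ‖latt c‖ ≤
        ‖latt a‖ / 2 + 16 * d * (5 * d) ^ (2 * (d - 1)) * Λ ^ (2 * d - 1) / 2 ∧
      0 ≤ ⟪latt a, latt c⟫ := by
  have hd₀ : 0 < d := Nat.pos_of_ne_zero <| by rintro rfl; exact ha (Subsingleton.elim _ _)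
  have hd₁ : (1 : ℝ) ≤ d := Nat.one_le_cast.2 hd₀
  set R := ‖latt a‖
  set N := ⌈4 * d * Λ⌉₊
  have hN₁ : 4 * d * Λ ≤ N := Nat.le_ceil _
  have hN₂ : (N : ℝ) ≤ 5 * d * Λ := by
    nlinarith [Nat.ceil_lt_add_one (by positivity : 0 ≤ 4 * (d : ℝ) * Λ)]
  have hsqrt : √(d : ℝ) ≤ N := by
    nlinarith [Real.sqrt_le_self_iff.2 (Or.inr hd₁)]
  obtain ⟨q, c, a', T, hqN, hc₀, hdecomp, hc, hmain, hinner⟩ :=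
    exists_short_direction_decomposition_of_sqrt_le ha hsqrt
  have hq : (q : ℝ) ≤ (5 * d * Λ) ^ (d - 1) :=
    (Nat.cast_le.2 hqN).trans (by push_cast; gcongr)
  refine ⟨c, a', T, hc₀, ?_, hdecomp, ?_, hinner⟩
  · calc ‖latt c‖ ≤ 2 * √(d : ℝ) * q := hc
      _ ≤ 2 * √(d : ℝ) * (5 * d * Λ) ^ (d - 1) := by gcongr
      _ = 2 * √(d : ℝ) * (5 * d) ^ (d - 1) * Λ ^ (d - 1) := by rw [mul_pow]; ring
  · have hpow : Λ ^ (2 * d - 1) = Λ * (Λ ^ (d - 1)) ^ 2 := by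
      rw [← pow_mul, ← pow_succ']; congr 1; omega
    have hR : 2 * d * Λ * R / N ≤ R / 2 := by
      rw [div_le_div_iff₀ (by positivity) two_pos]; nlinarith [norm_nonneg (latt a)]
    calc Λ * (‖latt a'‖ + ‖latt c‖) * ‖latt c‖ ≤ Λ * (2 * d * R / N + 8 * d * q ^ 2) := by
          rw [mul_assoc]; gcongr
      _ = 2 * d * Λ * R / N + 8 * d * Λ * q ^ 2 := by ring
      _ ≤ R / 2 + 8 * d * Λ * ((5 * d * Λ) ^ (d - 1)) ^ 2 := by gcongr
      _ = R / 2 + 16 * d * (5 * d) ^ (2 * (d - 1)) * Λ ^ (2 * d - 1) / 2 := by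
          rw [hpow, mul_pow, mul_pow, ← pow_mul]; ring

/-- Proposition 4.2: there are constants `C₁, C₂ > 0` depending only on `d` such that
for every `Λ ≥ 1` and every `a ∈ ℤ^d` with `|a| ≥ C₁ Λ^{2d−1}` there are a nonzero
`c ∈ ℤ^d` with `|c| ≤ C₂ Λ^{d−1}`, a lattice point `a'` and a real `t ≥ 0` with
`a = a' + tc`, `|a| ≥ Λ(|a'| + |c|)|c|` and `⟨a,c⟩ ≥ 0`. -/
theorem stmt_11 (d : ℕ) (hd : 2 ≤ d) :
    ∃ C₁ C₂ : ℝ, 0 < C₁ ∧ 0 < C₂ ∧ ∀ Λ : ℝ, 1 ≤ Λ →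
      ∀ a : Fin d → ℤ, C₁ * Λ ^ (2 * d - 1) ≤ ‖latt a‖ →
        ∃ (c a' : Fin d → ℤ) (t : ℝ), c ≠ 0 ∧ ‖latt c‖ ≤ C₂ * Λ ^ (d - 1) ∧
          0 ≤ t ∧ latt a = latt a' + t • latt c ∧
          Λ * (‖latt a'‖ + ‖latt c‖) * ‖latt c‖ ≤ ‖latt a‖ ∧
          0 ≤ (⟪latt a, latt c⟫ : ℝ) := by
  have hd₀ : (0 : ℝ) < d := by exact_mod_cast (by omega : 0 < d)
  refine ⟨16 * d * (5 * d) ^ (2 * (d - 1)), 2 * √(d : ℝ) * (5 * d) ^ (d - 1), by positivity,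
    by positivity, fun Λ hΛ a ha => ?_⟩
  have hC : 0 < 16 * d * (5 * d) ^ (2 * (d - 1)) * Λ ^ (2 * d - 1) := by positivity
  have ha₀ : a ≠ 0 := by
    rintro rfl
    rw [latt_zero, norm_zero] at ha
    linarith
  obtain ⟨c, a', T, hc₀, hc, hdecomp, hmain, hinner⟩ := exists_short_direction_decomposition hΛ ha₀
  exact ⟨c, a', T, hc₀, hc, T.cast_nonneg, hdecomp, by linarith, hinner⟩
end

section
/- Let d ≥ 2, let Δ ≥ 1 be an integer, and let a, b, c ∈ ℤ^d. If there exists an integer T such that a + tc ∼_Δ b + tc for every integer t ≥ T, then a + tc ∼_Δ b + tc for every integer t. -/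
/-!
Fix `s ≫ 0` with `a + s c ∼_Δ b + s c` and follow a chain of `≈`-steps from `a + s c` to
`b + s c`, written as `u + s c ≈ v + s c`. Equal norms mean
`|u|² - |v|² = 2 s (⟨v, c⟩ - ⟨u, c⟩)`; the left side is bounded independently of `s`
(since `|u - v| ≤ Δ` and, inductively, `|u| = |a|`), while the right side is a multiple of
`2 s`. Hence `⟨u, c⟩ = ⟨v, c⟩` and `|u| = |v|` at every step, and a step whose endpoints
have the same `c`-component stays a step after translating both by any multiple of `c`.
-/

section

variable {d : ℕ}

lemma dotProduct_self_nonneg (x : Fin d → ℤ) : 0 ≤ x ⬝ᵥ x := by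
  simpa using dotProduct_star_self_nonneg x

lemma norm_latt_sq (x : Fin d → ℤ) : ‖latt x‖ ^ 2 = ((x ⬝ᵥ x : ℤ) : ℝ) := by
  rw [EuclideanSpace.norm_sq_eq, dotProduct]
  push_cast
  exact Finset.sum_congr rfl fun i _ => by simp [latt, sq]

lemma preRel_iff_dotProduct {Δ : ℕ} {x y : Fin d → ℤ} :
    preRel Δ x y ↔ x ⬝ᵥ x = y ⬝ᵥ y ∧ (x - y) ⬝ᵥ (x - y) ≤ (Δ : ℤ) ^ 2 := by
  unfold preRel
  rw [← sq_eq_sq₀ (norm_nonneg _) (norm_nonneg _), ← sq_le_sq₀ (norm_nonneg _) (by positivity),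
    norm_latt_sq, norm_latt_sq, norm_latt_sq]
  exact_mod_cast Iff.rfl

instance inst_s13 (Δ : ℕ) : Std.Symm (preRel (d := d) Δ) where
  symm x y hxy := by
    rw [preRel_iff_dotProduct] at hxy ⊢
    rw [← neg_sub, neg_dotProduct_neg]
    exact ⟨hxy.1.symm, hxy.2⟩

lemma dotProduct_add_smul_self (u c : Fin d → ℤ) (t : ℤ) :
    (u + t • c) ⬝ᵥ (u + t • c) = u ⬝ᵥ u + 2 * t * (u ⬝ᵥ c) + t ^ 2 * (c ⬝ᵥ c) := by
  simp only [add_dotProduct, dotProduct_add, smul_dotProduct, dotProduct_smul, smul_eq_mul,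
    dotProduct_comm c u]
  ring

lemma dotProduct_sub_self_le (x y : Fin d → ℤ) :
    (x - y) ⬝ᵥ (x - y) ≤ 2 * (x ⬝ᵥ x) + 2 * (y ⬝ᵥ y) := by
  have := dotProduct_self_nonneg (x + y)
  simp only [add_dotProduct, dotProduct_add, sub_dotProduct, dotProduct_sub,
    dotProduct_comm y x] at this ⊢
  linarith

lemma preRel_add_smul_iff {Δ : ℕ} {u v c : Fin d → ℤ} (huv : u ⬝ᵥ c = v ⬝ᵥ c) (t : ℤ) :
    preRel Δ (u + t • c) (v + t • c) ↔ preRel Δ u v := by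
  rw [preRel_iff_dotProduct, preRel_iff_dotProduct, add_sub_add_right_eq_sub,
    dotProduct_add_smul_self, dotProduct_add_smul_self, huv, add_left_inj, add_left_inj]

lemma dotProduct_eq_of_preRel_add_smul {Δ : ℕ} {u v c : Fin d → ℤ} {s : ℤ}
    (hs : 3 * (u ⬝ᵥ u) + 2 * (Δ : ℤ) ^ 2 < 2 * s) (h : preRel Δ (u + s • c) (v + s • c)) :
    u ⬝ᵥ c = v ⬝ᵥ c := by
  rw [preRel_iff_dotProduct, add_sub_add_right_eq_sub, dotProduct_add_smul_self,
    dotProduct_add_smul_self] at h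
  obtain ⟨hnorm, hdiff⟩ := h
  have hv : v ⬝ᵥ v ≤ 2 * (u ⬝ᵥ u) + 2 * (Δ : ℤ) ^ 2 := by
    simpa using (dotProduct_sub_self_le u (u - v)).trans (by linarith)
  have hu0 := dotProduct_self_nonneg u
  have hv0 := dotProduct_self_nonneg v
  have hgap : u ⬝ᵥ u - v ⬝ᵥ v = 2 * s * (v ⬝ᵥ c - u ⬝ᵥ c) := by linarith
  have hzero : u ⬝ᵥ u - v ⬝ᵥ v = 0 :=
    Int.eq_zero_of_abs_lt_dvd ⟨_, hgap⟩ (abs_sub_lt_iff.mpr ⟨by linarith, by linarith⟩)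
  have hs0 : 2 * s ≠ 0 := by linarith
  have := (mul_eq_zero.mp (hgap ▸ hzero)).resolve_left hs0
  linarith

lemma reflTransGen_preRel_add_smul {Δ : ℕ} {a b c : Fin d → ℤ} {s : ℤ}
    (hs : 3 * (a ⬝ᵥ a) + 2 * (Δ : ℤ) ^ 2 < 2 * s)
    (h : Relation.ReflTransGen (preRel Δ) (a + s • c) (b + s • c)) (t : ℤ) :
    Relation.ReflTransGen (preRel Δ) (a + t • c) (b + t • c) := by
  have hpull : Relation.ReflTransGen (fun u v => preRel Δ (u + s • c) (v + s • c)) a b := by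
    have := h.lift (p := fun u v => preRel Δ (u + s • c) (v + s • c)) (· - s • c)
      fun x y hxy => by simpa only [Function.onFun, sub_add_cancel] using hxy
    simpa only [Function.onFun, add_sub_cancel_right] using this
  suffices ∀ v, Relation.ReflTransGen (fun u v => preRel Δ (u + s • c) (v + s • c)) a v →
      v ⬝ᵥ v = a ⬝ᵥ a ∧ Relation.ReflTransGen (preRel Δ) (a + t • c) (v + t • c) from
    (this b hpull).2
  intro v hv
  induction hv with
  | refl => exact ⟨rfl, .refl⟩
  | @tail u v _ hstep ih =>
    obtain ⟨hu, hchain⟩ := ih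
    have hc := dotProduct_eq_of_preRel_add_smul (hu ▸ hs) hstep
    have huv := (preRel_add_smul_iff hc s).mp hstep
    exact ⟨((preRel_iff_dotProduct.mp huv).1 ▸ hu),
      hchain.tail ((preRel_add_smul_iff hc t).mpr huv)⟩

end

theorem stmt_13_general {d : ℕ} (Δ : ℕ) (a b c : Fin d → ℤ)
    (h : ∃ T : ℤ, ∀ t : ℤ, T ≤ t →
      Relation.EqvGen (preRel Δ) (a + t • c) (b + t • c)) :
    ∀ t : ℤ, Relation.EqvGen (preRel Δ) (a + t • c) (b + t • c) := by
  obtain ⟨T, hT⟩ := h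
  set s := max T (3 * (a ⬝ᵥ a) + 2 * (Δ : ℤ) ^ 2 + 1)
  have hs : 3 * (a ⬝ᵥ a) + 2 * (Δ : ℤ) ^ 2 < 2 * s := by
    have := le_max_right T (3 * (a ⬝ᵥ a) + 2 * (Δ : ℤ) ^ 2 + 1)
    nlinarith [dotProduct_self_nonneg a]
  rw [Relation.EqvGen.eqvGen_eq_reflTransGen] at hT ⊢
  exact reflTransGen_preRel_add_smul hs (hT s (le_max_left _ _))

/-- Proposition 4.4(i): if `[a + tc]_Δ = [b + tc]_Δ` for all sufficiently large
integers `t`, then `[a + tc]_Δ = [b + tc]_Δ` for all integers `t`. -/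
theorem stmt_13 {d : ℕ} (hd : 2 ≤ d) (Δ : ℕ) (hΔ : 1 ≤ Δ) (a b c : Fin d → ℤ)
    (h : ∃ T : ℤ, ∀ t : ℤ, T ≤ t →
      Relation.EqvGen (preRel Δ) (a + t • c) (b + t • c)) :
    ∀ t : ℤ, Relation.EqvGen (preRel Δ) (a + t • c) (b + t • c) :=
  stmt_13_general Δ a b c h
end

section
/- Let n ≥ 1 be an integer. There exists a constant C > 0, depending only on n, with the following property: if f : ℝ → ℝ is n times continuously differentiable on the interval I = (−1, 1) and satisfies |f^{(n)}(t)| ≥ 1 for all t ∈ I, then for every ε > 0 the Lebesgue measure of the set {t ∈ I : |f(t)| < ε} is at most C ε^{1/n}. -/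
/-!
Induction on `n`. If `f⁽ⁿ⁾ ≥ λ > 0` on an interval, then `f⁽ⁿ⁻¹⁾` is increasing with slope at
least `λ`, so it stays in `[-δ, δ]` only on a set of length at most `2δ/λ`. Off that set the
interval splits into at most two subintervals on which `|f⁽ⁿ⁻¹⁾| > δ`, and the induction
hypothesis applies there with `λ` replaced by `δ`. The choice `δ = λ (ε/λ)^{1/n}` balances the
two contributions and yields `|{|f| < ε}| ≤ (2^{n+1} - 2) (ε/λ)^{1/n}`. A sign change of `f⁽ⁿ⁾`
is excluded by Darboux's theorem.
-/

open Set MeasureTheory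

lemma Real.volume_le_ofReal_of_forall_dist_le {S : Set ℝ} {M : ℝ}
    (h : ∀ x ∈ S, ∀ y ∈ S, dist x y ≤ M) : volume S ≤ ENNReal.ofReal M :=
  (Real.volume_le_diam S).trans <| Metric.ediam_le fun x hx y hy => by
    rw [edist_dist]
    exact ENNReal.ofReal_le_ofReal (h x hx y hy)

namespace Set.OrdConnected

variable {s : Set ℝ} {f f' : ℝ → ℝ}

lemma inter_preimage_of_monotoneOn {t : Set ℝ} (hs : s.OrdConnected) (ht : t.OrdConnected)
    (hf : MonotoneOn f s) : (s ∩ f ⁻¹' t).OrdConnected := by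
  obtain ⟨u, hu, heq⟩ := ht.preimage_monotoneOn hf
  rw [heq]
  exact hs.inter hu

lemma mul_sub_le_sub_of_le_hasDerivAt (hs : s.OrdConnected)
    (hf : ∀ t ∈ s, HasDerivAt f (f' t) t) {C : ℝ} (hC : ∀ t ∈ s, C ≤ f' t)
    {x y : ℝ} (hx : x ∈ s) (hy : y ∈ s) (hxy : x ≤ y) : C * (y - x) ≤ f y - f x :=
  hs.convex.mul_sub_le_image_sub_of_le_deriv
    (fun t ht => (hf t ht).continuousAt.continuousWithinAt)
    (fun t ht => (hf t (interior_subset ht)).differentiableAt.differentiableWithinAt)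
    (fun t ht => (hf t (interior_subset ht)).deriv ▸ hC t (interior_subset ht)) x hx y hy hxy

lemma volume_abs_le_le_of_le_hasDerivAt (hs : s.OrdConnected)
    (hf : ∀ t ∈ s, HasDerivAt f (f' t) t) {lam : ℝ} (hlam : 0 < lam)
    (hf' : ∀ t ∈ s, lam ≤ f' t) (δ : ℝ) :
    volume {t ∈ s | |f t| ≤ δ} ≤ ENNReal.ofReal (2 * δ / lam) := by
  refine Real.volume_le_ofReal_of_forall_dist_le fun x hx y hy => ?_
  wlog hxy : x ≤ y generalizing x y
  · rw [dist_comm]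
    exact this y hy x hx (le_of_not_ge hxy)
  have hgrowth := hs.mul_sub_le_sub_of_le_hasDerivAt hf hf' hx.1 hy.1 hxy
  rw [Real.dist_eq, abs_sub_comm, abs_of_nonneg (sub_nonneg.2 hxy), le_div_iff₀ hlam]
  linarith [abs_le.1 hx.2, abs_le.1 hy.2]

lemma forall_pos_or_forall_neg_of_hasDerivAt (hs : s.OrdConnected)
    (hf : ∀ t ∈ s, HasDerivAt f (f' t) t) (hf' : ∀ t ∈ s, f' t ≠ 0) :
    (∀ t ∈ s, 0 < f' t) ∨ ∀ t ∈ s, f' t < 0 := by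
  by_contra! hcon
  obtain ⟨⟨x, hx, hx0⟩, y, hy, hy0⟩ := hcon
  have himage := hs.image_hasDerivWithinAt fun t ht => (hf t ht).hasDerivWithinAt
  obtain ⟨z, hz, hz0⟩ : (0 : ℝ) ∈ f' '' s :=
    himage.out (mem_image_of_mem f' hx) (mem_image_of_mem f' hy) ⟨hx0, hy0⟩
  exact hf' z hz hz0

end Set.OrdConnected

/-- `g i` stands for the `i`-th derivative of `g 0`; carrying the derivatives as an explicit chain
keeps the hypothesis stable under restriction to a subinterval and under negation. -/
def SublevelEstimate (k : ℕ) (C : ℝ) : Prop :=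
  ∀ s : Set ℝ, s.OrdConnected → ∀ (g : ℕ → ℝ → ℝ) (lam ε : ℝ), 0 < lam → 0 < ε →
    (∀ i < k, ∀ t ∈ s, HasDerivAt (g i) (g (i + 1) t) t) → (∀ t ∈ s, lam ≤ g k t) →
    volume {t ∈ s | |g 0 t| < ε} ≤ ENNReal.ofReal (C * (ε / lam) ^ ((k : ℝ)⁻¹))

theorem sublevelEstimate_one : SublevelEstimate 1 2 := by
  intro s hs g lam ε hlam _ hg hg1
  have hband := hs.volume_abs_le_le_of_le_hasDerivAt (hg 0 one_pos) hlam hg1 ε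
  rw [Nat.cast_one, inv_one, Real.rpow_one, ← mul_div_assoc]
  refine (measure_mono ?_).trans hband
  exact fun t ht => ⟨ht.1, ht.2.le⟩

theorem SublevelEstimate.succ {k : ℕ} {C : ℝ} (hk : 1 ≤ k) (hC : 0 ≤ C)
    (h : SublevelEstimate k C) : SublevelEstimate (k + 1) (2 * C + 2) := by
  intro s hs g lam ε hlam hε hg hgk
  set u := (ε / lam) ^ (((k + 1 : ℕ) : ℝ)⁻¹)
  have hu : 0 < u := by positivity
  have hδ : 0 < lam * u := mul_pos hlam hu
  -- `δ = lam * u` is chosen so that the induction hypothesis also contributes multiples of `u`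
  have hexp : (ε / (lam * u)) ^ ((k : ℝ)⁻¹) = u := by
    have hpow : ε / lam = u ^ (k + 1) :=
      (Real.rpow_inv_natCast_pow (div_pos hε hlam).le k.succ_ne_zero).symm
    rw [← div_div, hpow, pow_succ, mul_div_cancel_right₀ _ hu.ne',
      Real.pow_rpow_inv_natCast hu.le (by omega)]
  have hchain : ∀ i < k, ∀ t ∈ s, HasDerivAt (g i) (g (i + 1) t) t :=
    fun i hi => hg i (by omega)
  have hmono : MonotoneOn (g k) s := fun x hx y hy hxy => by
    nlinarith [hs.mul_sub_le_sub_of_le_hasDerivAt (hg k k.lt_succ_self) hgk hx hy hxy,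
      mul_nonneg hlam.le (sub_nonneg.2 hxy)]
  have hband := hs.volume_abs_le_le_of_le_hasDerivAt (hg k k.lt_succ_self) hlam hgk (lam * u)
  have hplus := h _ (hs.inter_preimage_of_monotoneOn ordConnected_Ioi hmono) g _ ε hδ hε
    (fun i hi t ht => hchain i hi t ht.1) (fun t ht => le_of_lt ht.2)
  have hminus := h _ (hs.inter_preimage_of_monotoneOn ordConnected_Iio hmono) (fun i t => -g i t)
    _ ε hδ hε (fun i hi t ht => (hchain i hi t ht.1).neg) (fun t ht => le_neg_of_le_neg ht.2.le)
  simp only [abs_neg] at hminus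
  rw [hexp] at hplus hminus
  have hcover : {t ∈ s | |g 0 t| < ε} ⊆ {t ∈ s | |g k t| ≤ lam * u} ∪
      {t ∈ s ∩ g k ⁻¹' Ioi (lam * u) | |g 0 t| < ε} ∪
      {t ∈ s ∩ g k ⁻¹' Iio (-(lam * u)) | |g 0 t| < ε} := by
    rintro t ⟨ht, hft⟩
    rcases lt_or_ge (lam * u) (g k t) with hgt | hle
    · exact Or.inl (Or.inr ⟨⟨ht, hgt⟩, hft⟩)
    rcases lt_or_ge (g k t) (-(lam * u)) with hlt | hge
    · exact Or.inr ⟨⟨ht, hlt⟩, hft⟩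
    · exact Or.inl (Or.inl ⟨ht, abs_le.2 ⟨hge, hle⟩⟩)
  calc volume {t ∈ s | |g 0 t| < ε}
      ≤ ENNReal.ofReal (2 * (lam * u) / lam) + ENNReal.ofReal (C * u) +
          ENNReal.ofReal (C * u) :=
        (measure_mono hcover).trans <| (measure_union_le _ _).trans <|
          add_le_add ((measure_union_le _ _).trans (add_le_add hband hplus)) hminus
    _ = ENNReal.ofReal ((2 * C + 2) * u) := by
        rw [← ENNReal.ofReal_add (by positivity) (by positivity),
          ← ENNReal.ofReal_add (by positivity) (by positivity)]
        congr 1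
        field_simp
        ring

theorem sublevelEstimate_two_pow_sub_two {k : ℕ} (hk : 1 ≤ k) :
    SublevelEstimate k (2 ^ (k + 1) - 2) := by
  induction k, hk using Nat.le_induction with
  | base => norm_num [sublevelEstimate_one]
  | succ k hk ih =>
    have hC : (0 : ℝ) ≤ 2 ^ (k + 1) - 2 := by
      linarith [lt_self_pow₀ (one_lt_two : (1 : ℝ) < 2) (by omega : 1 < k + 1)]
    convert ih.succ hk hC using 1
    ring

theorem SublevelEstimate.of_le_abs {k : ℕ} {C : ℝ} (h : SublevelEstimate k C) (hk : 1 ≤ k)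
    {s : Set ℝ} (hs : s.OrdConnected) {g : ℕ → ℝ → ℝ} {lam ε : ℝ} (hlam : 0 < lam)
    (hε : 0 < ε) (hg : ∀ i < k, ∀ t ∈ s, HasDerivAt (g i) (g (i + 1) t) t)
    (hgk : ∀ t ∈ s, lam ≤ |g k t|) :
    volume {t ∈ s | |g 0 t| < ε} ≤ ENNReal.ofReal (C * (ε / lam) ^ ((k : ℝ)⁻¹)) := by
  obtain ⟨j, rfl⟩ : ∃ j, k = j + 1 := ⟨k - 1, by omega⟩
  have hne : ∀ t ∈ s, g (j + 1) t ≠ 0 := fun t ht h0 => by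
    have := hgk t ht
    rw [h0, abs_zero] at this
    linarith
  rcases hs.forall_pos_or_forall_neg_of_hasDerivAt (hg j j.lt_succ_self) hne with hpos | hneg
  · exact h s hs g lam ε hlam hε hg fun t ht => abs_of_pos (hpos t ht) ▸ hgk t ht
  · simpa only [abs_neg] using h s hs (fun i t => -g i t) lam ε hlam hε
      (fun i hi t ht => (hg i hi t ht).neg) fun t ht => abs_of_neg (hneg t ht) ▸ hgk t ht

lemma ContDiffOn.hasDerivAt_iteratedDeriv {𝕜 F : Type*} [NontriviallyNormedField 𝕜]
    [NormedAddCommGroup F] [NormedSpace 𝕜 F] {n i : ℕ} {f : 𝕜 → F} {s : Set 𝕜}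
    (hs : IsOpen s) (hf : ContDiffOn 𝕜 n f s) (hi : i < n) {t : 𝕜} (ht : t ∈ s) :
    HasDerivAt (iteratedDeriv i f) (iteratedDeriv (i + 1) f t) t := by
  have hdiff : DifferentiableOn 𝕜 (iteratedDeriv i f) s :=
    (hf.differentiableOn_iteratedDerivWithin (by exact_mod_cast hi) hs.uniqueDiffOn).congr
      (iteratedDerivWithin_of_isOpen hs).symm
  rw [iteratedDeriv_succ]
  exact ((hdiff t ht).differentiableAt (hs.mem_nhds ht)).hasDerivAt

/-- Lemma A1: there is `C > 0` depending only on `n ≥ 1` such that for every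
`f : (−1,1) → ℝ` of class `Cⁿ` with `|f⁽ⁿ⁾| ≥ 1` on `(−1,1)` and every `ε > 0`,
the Lebesgue measure of `{t ∈ (−1,1) : |f(t)| < ε}` is at most `C ε^{1/n}`. -/
theorem stmt_17 (n : ℕ) (hn : 1 ≤ n) :
    ∃ C : ℝ, 0 < C ∧ ∀ f : ℝ → ℝ,
      ContDiffOn ℝ n f (Set.Ioo (-1 : ℝ) 1) →
      (∀ t ∈ Set.Ioo (-1 : ℝ) 1,
        1 ≤ |iteratedDerivWithin n f (Set.Ioo (-1 : ℝ) 1) t|) →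
      ∀ ε : ℝ, 0 < ε →
        MeasureTheory.volume {t | t ∈ Set.Ioo (-1 : ℝ) 1 ∧ |f t| < ε} ≤
          ENNReal.ofReal (C * ε ^ (1 / (n : ℝ))) := by
  refine ⟨2 ^ (n + 1) - 2, ?_, fun f hf hfn ε hε => ?_⟩
  · linarith [lt_self_pow₀ (one_lt_two : (1 : ℝ) < 2) (by omega : 1 < n + 1)]
  have h := (sublevelEstimate_two_pow_sub_two hn).of_le_abs hn ordConnected_Ioo
    (g := fun i => iteratedDeriv i f) one_pos hε
    (fun i hi t ht => hf.hasDerivAt_iteratedDeriv isOpen_Ioo hi ht)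
    (fun t ht => (iteratedDerivWithin_of_isOpen (n := n) (f := f) isOpen_Ioo ht) ▸ hfn t ht)
  simpa [one_div] using h
end
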